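/- A union ⋃_{t ∈ R} U_t of principal upper classes intersected with K([0,1]^ω) is open in the hyperspace K([0,1]^ω) if and only if R is nice, i.e., whenever R contains some positive type or ∞, it contains (m,0) for some m > 0. -/

import Mathlib

open Topology TopologicalSpace Set

/-- The hyperspace of compact subsets (including `∅`) of `X`. -/
def Kt (X : Type*) [TopologicalSpace X] : Type _ := {A : Set X // IsCompact A}

/-- The Vietoris topology on the hyperspace, generated by the sets
`U⁺ = {A : A ⊆ U}` and `U⁻ = {A : A ∩ U ≠ ∅}` for `U` open. -/
instance Kt.topology (X : Type*) [TopologicalSpace X] : TopologicalSpace (Kt X) :=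
  TopologicalSpace.generateFrom
    ({S | ∃ U : Set X, IsOpen U ∧ S = {A : Kt X | A.1 ⊆ U}} ∪
     {S | ∃ U : Set X, IsOpen U ∧ S = {A : Kt X | (A.1 ∩ U).Nonempty}})

/-- The Hilbert cube `[0,1]^ω`. -/
abbrev HilbertCube : Type := ℕ → unitInterval

open scoped Classical in
/-- The type of a space: the pair (number of connected components, number of
nondegenerate components) if the number of components is finite; `none` (= `∞`) otherwise. -/
noncomputable def typeOf (K : Type*) [TopologicalSpace K] : Option (ℕ × ℕ) :=
  if Finite (ConnectedComponents K) then
    some (Nat.card (ConnectedComponents K),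
      Nat.card {c : ConnectedComponents K |
        ¬ ({x : K | ConnectedComponents.mk x = c} : Set K).Subsingleton})
  else none

/-- The order on the type poset `T ∪ {∞}` (`none` plays the role of `∞`):
`(0,0)` is comparable only with itself, positive finite types are ordered by the
product order, and `∞` is above every positive finite type. -/
def tle : Option (ℕ × ℕ) → Option (ℕ × ℕ) → Prop
  | none, none => True
  | none, some _ => False
  | some p, none => 0 < p.1
  | some p, some q => (p = (0, 0) ∧ q = (0, 0)) ∨ (0 < p.1 ∧ p.1 ≤ q.1 ∧ p.2 ≤ q.2)

/-- Membership in the type poset `T ∪ {∞}`: finite types are pairs `(m, n)` with `m ≥ n`. -/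
def isType : Option (ℕ × ℕ) → Prop
  | none => True
  | some p => p.2 ≤ p.1

/-!
A finite set of `n > 0` points has type `(n, 0)`, and finite sets are dense in the
hyperspace. So if the union is open and contains some type other than `(0, 0)`, it contains a
Cantor set (type `∞`, above every positive type), hence a nearby finite set, which forces some
`(m, 0)`, `m > 0`, into `R`.

Conversely, let `K` have type at least `t ∈ R`. If `t = (0, 0)` then `K = ∅`, which is isolated.
Otherwise `(m, 0) ∈ R` for some `m > 0`. Pairwise disjoint open sets around the pieces of a
clopen partition of `K` (its components if there are finitely many, `m` pieces otherwise) give a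
Vietoris neighbourhood whose members have at least as many components as the partition has
pieces. When `K` has finitely many components, we also put `m` disjoint open sets, each meeting
`K`, around each nondegenerate component: a member `L` with fewer than `m` components then has,
by pigeonhole, a nondegenerate component near each nondegenerate component of `K`. Either way
`L` lies above `t` or above `(m, 0)`.
-/

open scoped Function

namespace Kt

variable {X : Type*} [TopologicalSpace X]

lemma isOpen_setOf_subset {U : Set X} (hU : IsOpen U) : IsOpen {A : Kt X | A.1 ⊆ U} :=
  .basic _ (.inl ⟨U, hU, rfl⟩)

lemma isOpen_setOf_inter_nonempty {U : Set X} (hU : IsOpen U) :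
    IsOpen {A : Kt X | (A.1 ∩ U).Nonempty} :=
  .basic _ (.inr ⟨U, hU, rfl⟩)

/-- The basic Vietoris open set `⟨V_i⟩_i`. -/
def box {ι : Type*} (V : ι → Set X) : Set (Kt X) :=
  {A | A.1 ⊆ ⋃ i, V i ∧ ∀ i, (A.1 ∩ V i).Nonempty}

lemma isOpen_box {ι : Type*} [Finite ι] {V : ι → Set X} (hV : ∀ i, IsOpen (V i)) :
    IsOpen (box V) := by
  have : box V = {A | A.1 ⊆ ⋃ i, V i} ∩ ⋂ i, {A | (A.1 ∩ V i).Nonempty} := by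
    ext A; simp [box]
  rw [this]
  exact (isOpen_setOf_subset (isOpen_iUnion hV)).inter
    (isOpen_iInter_of_finite fun i => isOpen_setOf_inter_nonempty (hV i))

lemma exists_finite_forall_mem_of_isOpen {S : Set (Kt X)} (hS : IsOpen S) {K : Kt X}
    (hK : K ∈ S) :
    ∃ D : Set X, D.Finite ∧ D ⊆ K.1 ∧
      ∀ F : Set X, ∀ hF : F.Finite, D ⊆ F → F ⊆ K.1 → (⟨F, hF.isCompact⟩ : Kt X) ∈ S := by
  induction hS with
  | basic s hs =>
    rcases hs with ⟨U, hU, rfl⟩ | ⟨U, hU, rfl⟩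
    · exact ⟨∅, finite_empty, empty_subset _, fun F _ _ hFK => hFK.trans hK⟩
    · obtain ⟨x, hxK, hxU⟩ := hK
      exact ⟨{x}, finite_singleton x, singleton_subset_iff.2 hxK,
        fun F _ hxF _ => ⟨x, hxF rfl, hxU⟩⟩
  | univ => exact ⟨∅, finite_empty, empty_subset _, fun _ _ _ _ => trivial⟩
  | inter s t _ _ ihs iht =>
    obtain ⟨D₁, hD₁, hD₁K, h₁⟩ := ihs hK.1
    obtain ⟨D₂, hD₂, hD₂K, h₂⟩ := iht hK.2
    exact ⟨D₁ ∪ D₂, hD₁.union hD₂, union_subset hD₁K hD₂K, fun F hF hDF hFK =>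
      ⟨h₁ F hF (subset_union_left.trans hDF) hFK, h₂ F hF (subset_union_right.trans hDF) hFK⟩⟩
  | sUnion T _ ih =>
    obtain ⟨t, htT, hKt⟩ := hK
    obtain ⟨D, hD, hDK, h⟩ := ih t htT hKt
    exact ⟨D, hD, hDK, fun F hF hDF hFK => ⟨t, htT, h F hF hDF hFK⟩⟩

end Kt

section Components

variable {X : Type*} [TopologicalSpace X]

lemma eq_of_connectedComponents_mk_eq {ι : Type*} {V : ι → Set X} (hV : ∀ i, IsOpen (V i))
    (hVd : Pairwise (Disjoint on V)) {L : Set X} (hL : L ⊆ ⋃ i, V i) {x y : L} {i j : ι}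
    (hx : x.1 ∈ V i) (hy : y.1 ∈ V j)
    (hxy : ConnectedComponents.mk x = ConnectedComponents.mk y) : i = j := by
  by_contra hij
  set W : Set X := ⋃ (k : ι) (_ : k ≠ i), V k
  have hcover : connectedComponent x ⊆ Subtype.val ⁻¹' V i ∪ Subtype.val ⁻¹' W := by
    intro z _
    obtain ⟨k, hk⟩ := mem_iUnion.1 (hL z.2)
    by_cases hki : k = i
    · exact .inl (hki ▸ hk)
    · exact .inr (mem_iUnion₂.2 ⟨k, hki, hk⟩)
  have hdisj : Disjoint (V i) W := disjoint_iUnion₂_right.2 fun k hk => hVd (Ne.symm hk)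
  have hxV : connectedComponent x ⊆ Subtype.val ⁻¹' V i :=
    isPreconnected_connectedComponent.subset_left_of_subset_union
      ((hV i).preimage continuous_subtype_val)
      ((isOpen_biUnion fun k _ => hV k).preimage continuous_subtype_val)
      (hdisj.preimage _) hcover ⟨x, mem_connectedComponent, hx⟩
  exact disjoint_left.1 (hVd hij) (hxV (ConnectedComponents.coe_eq_coe'.1 hxy.symm)) hy

lemma enatCard_le_enatCard_connectedComponents {ι : Type*} {V : ι → Set X}
    (hV : ∀ i, IsOpen (V i)) (hVd : Pairwise (Disjoint on V)) {L : Set X}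
    (hL : L ⊆ ⋃ i, V i) (hLV : ∀ i, (L ∩ V i).Nonempty) :
    ENat.card ι ≤ ENat.card (ConnectedComponents L) := by
  choose p hp using hLV
  exact ENat.card_le_card_of_injective (f := fun i => ConnectedComponents.mk ⟨p i, (hp i).1⟩)
    fun i j h => eq_of_connectedComponents_mk_eq hV hVd hL (hp i).2 (hp j).2 h

def nondegenerateComponents (Y : Type*) [TopologicalSpace Y] : Set (ConnectedComponents Y) :=
  {c | ¬ ({x : Y | ConnectedComponents.mk x = c} : Set Y).Subsingleton}

lemma exists_mem_nondegenerateComponents {ι : Type*} {W : ι → Set X}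
    (hWd : Pairwise (Disjoint on W)) {L : Set X} (hLW : ∀ j, (L ∩ W j).Nonempty)
    (hL : ENat.card (ConnectedComponents L) < ENat.card ι) :
    ∃ x : L, ConnectedComponents.mk x ∈ nondegenerateComponents L ∧ ∃ j, x.1 ∈ W j := by
  choose q hq using hLW
  obtain ⟨j, j', hjj', hne⟩ : ∃ j j', ConnectedComponents.mk (⟨q j, (hq j).1⟩ : L) =
      ConnectedComponents.mk ⟨q j', (hq j').1⟩ ∧ j ≠ j' := by
    by_contra! h
    exact hL.not_ge (ENat.card_le_card_of_injective fun j j' hj => h j j' hj)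
  refine ⟨⟨q j, (hq j).1⟩, fun hsub => ?_, j, (hq j).2⟩
  have : q j = q j' := congrArg Subtype.val (hsub (by exact rfl) (by exact hjj'.symm))
  exact disjoint_left.1 (hWd hne) (hq j).2 (this ▸ (hq j').2)

lemma ConnectedComponents.mk_injective [TotallyDisconnectedSpace X] :
    Function.Injective (ConnectedComponents.mk : X → ConnectedComponents X) := fun x y h => by
  simpa using ConnectedComponents.coe_eq_coe.1 h

end Components

section TypeOf

lemma tle_zero_iff {t : Option (ℕ × ℕ)} : tle (some (0, 0)) t ↔ t = some (0, 0) := by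
  rcases t with _ | ⟨a, b⟩ <;> simp [tle]

lemma tle_none_of_isType {o : Option (ℕ × ℕ)} (h : isType o) (ho : o ≠ some (0, 0)) :
    tle o none := by
  rcases o with _ | ⟨a, b⟩
  · trivial
  · simp only [isType, ne_eq, Option.some.injEq, Prod.mk.injEq] at h ho
    show 0 < a
    omega

lemma exists_eq_some_zero_of_tle {o : Option (ℕ × ℕ)} {n : ℕ} (hn : 0 < n)
    (h : tle o (some (n, 0))) : ∃ m, 0 < m ∧ o = some (m, 0) := by
  rcases o with _ | ⟨a, b⟩
  · exact h.elim
  · rcases h with ⟨-, h⟩ | ⟨ha, -, hb⟩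
    · simp only [Prod.mk.injEq] at h
      omega
    · obtain rfl : b = 0 := Nat.le_zero.1 hb
      exact ⟨a, ha, rfl⟩

variable {Y : Type*} [TopologicalSpace Y]

lemma typeOf_of_finite_connectedComponents [Finite (ConnectedComponents Y)] :
    typeOf Y = some (Nat.card (ConnectedComponents Y), Nat.card (nondegenerateComponents Y)) := by
  rw [typeOf, if_pos ‹_›]
  rfl

lemma typeOf_of_infinite_connectedComponents [Infinite (ConnectedComponents Y)] :
    typeOf Y = none := by
  rw [typeOf, if_neg (not_finite_iff_infinite.2 ‹_›)]

lemma typeOf_eq_zero_iff : typeOf Y = some (0, 0) ↔ IsEmpty Y := by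
  constructor
  · intro h
    cases finite_or_infinite (ConnectedComponents Y)
    · rw [typeOf_of_finite_connectedComponents, Option.some_inj, Prod.mk.injEq,
        Nat.card_eq_zero, or_iff_left (not_infinite_iff_finite.2 ‹_›)] at h
      have := h.1
      exact (ConnectedComponents.mk : Y → _).isEmpty
    · simp [typeOf_of_infinite_connectedComponents] at h
  · intro
    have : IsEmpty (ConnectedComponents Y) := ConnectedComponents.surjective_coe.isEmpty
    simp [typeOf_of_finite_connectedComponents, nondegenerateComponents]

lemma typeOf_of_finite [T1Space Y] [Finite Y] : typeOf Y = some (Nat.card Y, 0) := by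
  have hbij : Function.Bijective (ConnectedComponents.mk : Y → ConnectedComponents Y) :=
    ⟨ConnectedComponents.mk_injective, ConnectedComponents.surjective_coe⟩
  have : nondegenerateComponents Y = ∅ := eq_empty_of_forall_notMem fun c hc =>
    hc fun x hx y hy => hbij.1 (hx.trans hy.symm)
  rw [typeOf_of_finite_connectedComponents, ← Nat.card_eq_of_bijective _ hbij, this]
  simp

lemma tle_some_zero_typeOf {m : ℕ} (hm : 0 < m)
    (h : (m : ℕ∞) ≤ ENat.card (ConnectedComponents Y)) : tle (some (m, 0)) (typeOf Y) := by
  cases finite_or_infinite (ConnectedComponents Y)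
  · rw [ENat.card_eq_coe_natCard, Nat.cast_le] at h
    rw [typeOf_of_finite_connectedComponents]
    exact .inr ⟨hm, h, Nat.zero_le _⟩
  · rw [typeOf_of_infinite_connectedComponents]
    exact hm

lemma tle_some_typeOf_iff [Finite (ConnectedComponents Y)] {p : ℕ × ℕ} (hp : p ≠ (0, 0)) :
    tle (some p) (typeOf Y) ↔
      0 < p.1 ∧ p.1 ≤ Nat.card (ConnectedComponents Y) ∧
        p.2 ≤ Nat.card (nondegenerateComponents Y) := by
  rw [typeOf_of_finite_connectedComponents]
  simp [tle, hp]

end TypeOf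

def IsNice (R : Set (Option (ℕ × ℕ))) : Prop :=
  (∃ o ∈ R, o ≠ some (0, 0)) → ∃ m : ℕ, 0 < m ∧ some (m, 0) ∈ R

/-- The union `⋃_{t ∈ R} U_t` of principal upper classes. -/
def upperClassUnion (X : Type*) [TopologicalSpace X] (R : Set (Option (ℕ × ℕ))) :
    Set (Kt X) :=
  {K | ∃ o ∈ R, tle o (typeOf K.1)}

theorem IsNice.of_isOpen {X : Type*} [TopologicalSpace X] [T1Space X] (K₀ : Kt X)
    [Infinite (ConnectedComponents K₀.1)] {R : Set (Option (ℕ × ℕ))}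
    (hR : ∀ o ∈ R, isType o) (hopen : IsOpen (upperClassUnion X R)) : IsNice R := by
  rintro ⟨o, hoR, ho⟩
  have hK₀ : K₀ ∈ upperClassUnion X R := ⟨o, hoR, by
    rw [typeOf_of_infinite_connectedComponents]; exact tle_none_of_isType (hR o hoR) ho⟩
  obtain ⟨D, hD, hDK, hDS⟩ := Kt.exists_finite_forall_mem_of_isOpen hopen hK₀
  obtain ⟨c⟩ := Infinite.nonempty (ConnectedComponents K₀.1)
  obtain ⟨x, -⟩ := ConnectedComponents.surjective_coe c
  have hF : (insert (x : X) D).Finite := hD.insert _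
  obtain ⟨o', ho'R, ho'⟩ := hDS _ hF (subset_insert _ _) (insert_subset x.2 hDK)
  have : Finite ↥(insert (x : X) D) := hF.to_subtype
  rw [typeOf_of_finite] at ho'
  obtain ⟨m, hm, rfl⟩ := exists_eq_some_zero_of_tle Nat.card_pos ho'
  exact ⟨m, hm, ho'R⟩

lemma upperClassUnion_mem_nhds_of_isEmpty {X : Type*} [TopologicalSpace X]
    {R : Set (Option (ℕ × ℕ))} (hR : some (0, 0) ∈ R) {K : Kt X} (hK : IsEmpty K.1) :
    upperClassUnion X R ∈ 𝓝 K := by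
  refine Filter.mem_of_superset ((Kt.isOpen_setOf_subset isOpen_empty).mem_nhds ?_)
    fun L (hL : L.1 ⊆ ∅) => ?_
  · exact (isEmpty_coe_sort.1 hK).subset
  · have : IsEmpty L.1 := isEmpty_coe_sort.2 (subset_empty_iff.1 hL)
    exact ⟨_, hR, tle_zero_iff.2 (typeOf_eq_zero_iff.2 this)⟩

section Hausdorff

variable {X : Type*} [TopologicalSpace X] [T2Space X]

lemma exists_isOpen_pairwise_disjoint_of_isCompact {ι : Type*} [Finite ι] {Q : ι → Set X}
    (hQ : ∀ i, IsCompact (Q i)) (hQd : Pairwise (Disjoint on Q)) :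
    ∃ V : ι → Set X, (∀ i, IsOpen (V i) ∧ Q i ⊆ V i) ∧ Pairwise (Disjoint on V) :=
  (hQd.mono fun i j h => separatedNhds_iff_disjoint.1
    (SeparatedNhds.of_isCompact_isCompact (hQ i) (hQ j) h)).exists_mem_filter_basis_of_disjoint
    fun i => hasBasis_nhdsSet (Q i)

lemma Set.Infinite.exists_isOpen_pairwise_disjoint_subset {s V : Set X} (hs : s.Infinite)
    (hV : IsOpen V) (hsV : s ⊆ V) (N : ℕ) :
    ∃ B : Fin N → Set X, (∀ j, IsOpen (B j) ∧ B j ⊆ V ∧ (s ∩ B j).Nonempty) ∧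
      Pairwise (Disjoint on B) := by
  set z : Fin N → X := fun j => hs.natEmbedding s j
  have hz : Function.Injective z :=
    Subtype.val_injective.comp (hs.natEmbedding s).injective |>.comp Fin.val_injective
  obtain ⟨O, hO, hOd⟩ := exists_isOpen_pairwise_disjoint_of_isCompact
    (fun j => isCompact_singleton (x := z j)) fun i j h => disjoint_singleton.2 (hz.ne h)
  refine ⟨fun j => O j ∩ V, fun j => ⟨(hO j).1.inter hV, inter_subset_right, ?_⟩,
    fun i j h => (hOd h).mono inter_subset_left inter_subset_left⟩
  have hzs : z j ∈ s := (hs.natEmbedding s j).2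
  exact ⟨z j, hzs, (hO j).2 rfl, hsV hzs⟩

lemma Kt.exists_box_of_partition (K : Kt X) {ι : Type*} [Finite ι] {P : ι → Set K.1}
    (hP : ∀ i, IsClosed (P i)) (hPd : Pairwise (Disjoint on P)) (hPne : ∀ i, (P i).Nonempty)
    (hPcover : ⋃ i, P i = univ) :
    ∃ V : ι → Set X, (∀ i, IsOpen (V i) ∧ Subtype.val '' P i ⊆ V i) ∧
      Pairwise (Disjoint on V) ∧ K ∈ Kt.box V := by
  have : CompactSpace K.1 := isCompact_iff_compactSpace.1 K.2
  obtain ⟨V, hV, hVd⟩ := exists_isOpen_pairwise_disjoint_of_isCompact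
    (fun i => (hP i).isCompact.image continuous_subtype_val)
    fun i j h => (disjoint_image_iff Subtype.val_injective).2 (hPd h)
  refine ⟨V, hV, hVd, fun x hx => ?_, fun i => ?_⟩
  · obtain ⟨i, hi⟩ := mem_iUnion.1 (hPcover ▸ mem_univ (⟨x, hx⟩ : K.1))
    exact mem_iUnion.2 ⟨i, (hV i).2 ⟨_, hi, rfl⟩⟩
  · obtain ⟨x, hx⟩ := hPne i
    exact ⟨x, x.2, (hV i).2 ⟨x, hx, rfl⟩⟩

lemma Kt.exists_isOpen_forall_le_enatCard (K : Kt X) [Infinite (ConnectedComponents K.1)]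
    {k : ℕ} (hk : 0 < k) :
    ∃ S : Set (Kt X), IsOpen S ∧ K ∈ S ∧
      ∀ L ∈ S, (k : ℕ∞) ≤ ENat.card (ConnectedComponents L.1) := by
  obtain ⟨P, hP, hPne, hPd, hPcover⟩ :=
    ConnectedComponents.exists_fun_isClopen_of_infinite K.1 k hk
  obtain ⟨V, hV, hVd, hKV⟩ :=
    K.exists_box_of_partition (fun i => (hP i).isClosed) hPd hPne hPcover
  refine ⟨Kt.box V, Kt.isOpen_box fun i => (hV i).1, hKV, fun L hL => ?_⟩
  simpa using enatCard_le_enatCard_connectedComponents (fun i => (hV i).1) hVd hL.1 hL.2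

lemma Kt.exists_isOpen_forall_le_card_nondegenerateComponents (K : Kt X)
    [Finite (ConnectedComponents K.1)] (N : ℕ) :
    ∃ S : Set (Kt X), IsOpen S ∧ K ∈ S ∧ ∀ L ∈ S,
      ENat.card (ConnectedComponents K.1) ≤ ENat.card (ConnectedComponents L.1) ∧
      (ENat.card (ConnectedComponents L.1) < N →
        Nat.card (nondegenerateComponents K.1) ≤ Nat.card (nondegenerateComponents L.1)) := by
  set P : ConnectedComponents K.1 → Set K.1 := fun c => {x | ConnectedComponents.mk x = c}
  have hP_eq (y : K.1) : P (.mk y) = connectedComponent y := connectedComponents_preimage_singleton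
  have hP : ∀ c, IsClosed (P c) := ConnectedComponents.surjective_coe.forall.2 fun y =>
    hP_eq y ▸ isClosed_connectedComponent
  have hPd : Pairwise (Disjoint on P) := fun c d h =>
    disjoint_left.2 fun x hc hd => h (hc.symm.trans hd)
  obtain ⟨V, hV, hVd, hKV⟩ := K.exists_box_of_partition hP hPd
    ConnectedComponents.surjective_coe (eq_univ_of_forall fun x => mem_iUnion.2 ⟨_, rfl⟩)
  have hinf (c : nondegenerateComponents K.1) : (Subtype.val '' P c).Infinite := by
    obtain ⟨c, hc⟩ := c
    obtain ⟨y, rfl⟩ := ConnectedComponents.surjective_coe c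
    exact ((hP_eq y ▸ isPreconnected_connectedComponent).infinite_of_nontrivial
      (not_subsingleton_iff.1 hc)).image Subtype.val_injective.injOn
  choose B hB hBd using fun c : nondegenerateComponents K.1 =>
    (hinf c).exists_isOpen_pairwise_disjoint_subset (hV c).1 (hV c).2 N
  refine ⟨Kt.box V ∩ ⋂ c, ⋂ j, {A | (A.1 ∩ B c j).Nonempty}, ?_, ⟨hKV, ?_⟩,
    fun L hL => ⟨?_, fun hLN => ?_⟩⟩
  · exact (Kt.isOpen_box fun c => (hV c).1).inter (isOpen_iInter_of_finite fun c =>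
      isOpen_iInter_of_finite fun j => Kt.isOpen_setOf_inter_nonempty (hB c j).1)
  · simp only [mem_iInter]
    exact fun c j => (hB c j).2.2.mono
      (inter_subset_inter_left _ (image_subset_iff.2 fun x _ => x.2))
  · exact enatCard_le_enatCard_connectedComponents (fun c => (hV c).1) hVd hL.1.1 hL.1.2
  · have hLB : ∀ c j, (L.1 ∩ B c j).Nonempty := mem_iInter₂.1 hL.2
    choose x hx j hj using fun c =>
      exists_mem_nondegenerateComponents (hBd c) (hLB c) (by simpa using hLN)
    have : Finite (ConnectedComponents L.1) := ENat.card_lt_top.1 (lt_top_of_lt hLN)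
    refine Nat.card_le_card_of_injective (fun c => ⟨_, hx c⟩) fun c d h => Subtype.ext ?_
    exact eq_of_connectedComponents_mk_eq (fun c => (hV c).1) hVd hL.1.1
      ((hB c (j c)).2.1 (hj c)) ((hB d (j d)).2.1 (hj d)) (congrArg Subtype.val h)

variable {R : Set (Option (ℕ × ℕ))}

lemma upperClassUnion_mem_nhds_of_infinite {m : ℕ} (hm : 0 < m) (hmR : some (m, 0) ∈ R)
    (K : Kt X) [Infinite (ConnectedComponents K.1)] : upperClassUnion X R ∈ 𝓝 K := by
  obtain ⟨S, hS, hKS, hSL⟩ := K.exists_isOpen_forall_le_enatCard hm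
  exact Filter.mem_of_superset (hS.mem_nhds hKS) fun L hL =>
    ⟨_, hmR, tle_some_zero_typeOf hm (hSL L hL)⟩

lemma upperClassUnion_mem_nhds_of_finite {m : ℕ} (hm : 0 < m) (hmR : some (m, 0) ∈ R)
    {p : ℕ × ℕ} (hpR : some p ∈ R) (hp : p ≠ (0, 0)) (K : Kt X)
    [Finite (ConnectedComponents K.1)] (hK : tle (some p) (typeOf K.1)) :
    upperClassUnion X R ∈ 𝓝 K := by
  obtain ⟨hp₁, hpc, hpn⟩ := (tle_some_typeOf_iff hp).1 hK
  obtain ⟨S, hS, hKS, hSL⟩ := K.exists_isOpen_forall_le_card_nondegenerateComponents m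
  refine Filter.mem_of_superset (hS.mem_nhds hKS) fun L hL => ?_
  obtain ⟨hcard, hnondeg⟩ := hSL L hL
  by_cases hLm : ENat.card (ConnectedComponents L.1) < m
  · have : Finite (ConnectedComponents L.1) := ENat.card_lt_top.1 (lt_top_of_lt hLm)
    rw [ENat.card_eq_coe_natCard, ENat.card_eq_coe_natCard, Nat.cast_le] at hcard
    exact ⟨_, hpR, (tle_some_typeOf_iff hp).2 ⟨hp₁, hpc.trans hcard, hpn.trans (hnondeg hLm)⟩⟩
  · exact ⟨_, hmR, tle_some_zero_typeOf hm (not_lt.1 hLm)⟩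

theorem isOpen_upperClassUnion (hR : IsNice R) : IsOpen (upperClassUnion X R) := by
  refine isOpen_iff_mem_nhds.2 fun K ⟨o, hoR, hK⟩ => ?_
  rcases eq_or_ne o (some (0, 0)) with rfl | ho
  · exact upperClassUnion_mem_nhds_of_isEmpty hoR (typeOf_eq_zero_iff.1 (tle_zero_iff.1 hK))
  obtain ⟨m, hm, hmR⟩ := hR ⟨o, hoR, ho⟩
  cases finite_or_infinite (ConnectedComponents K.1)
  · rcases o with _ | p
    · rw [typeOf_of_finite_connectedComponents] at hK
      exact hK.elim
    · exact upperClassUnion_mem_nhds_of_finite hm hmR hoR (by simpa using ho) K hK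
  · exact upperClassUnion_mem_nhds_of_infinite hm hmR K

end Hausdorff

lemma exists_infinite_connectedComponents_hilbertCube :
    ∃ K : Kt HilbertCube, Infinite (ConnectedComponents K.1) := by
  set g : Bool → unitInterval := fun b => if b then 1 else 0
  have hg : Function.Injective g := Bool.injective_iff.2 (by simp [g])
  set f : (ℕ → Bool) → HilbertCube := (g ∘ ·)
  have hf : Continuous f :=
    continuous_pi fun i => continuous_of_discreteTopology.comp (continuous_apply i)
  have hfinj : Function.Injective f := hg.comp_left
  refine ⟨⟨range f, isCompact_range hf⟩, ?_⟩
  have : TotallyDisconnectedSpace (range f) := totallyDisconnectedSpace_subtype_iff.2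
    ((hf.isClosedEmbedding hfinj).isEmbedding.isTotallyDisconnected_range.2 inferInstance)
  have : Infinite (range f) := (infinite_range_of_injective hfinj).to_subtype
  exact Infinite.of_injective _ ConnectedComponents.mk_injective

theorem stmt18 (R : Set (Option (ℕ × ℕ))) (hR : ∀ o ∈ R, isType o) :
    IsOpen {K : Kt HilbertCube | ∃ o ∈ R, tle o (typeOf ↥K.1)} ↔
      ((∃ o ∈ R, o ≠ some (0, 0)) → ∃ m : ℕ, 0 < m ∧ some (m, 0) ∈ R) := by
  obtain ⟨K₀, _⟩ := exists_infinite_connectedComponents_hilbertCube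
  exact ⟨IsNice.of_isOpen K₀ hR, isOpen_upperClassUnion⟩
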